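/- arXiv:2001.10989 — 2 statements merged into one kernel-verified Lean document; each statement's English description precedes it below -/
import Mathlib

section
/- Let b and s be vectors in the positive orthant of R^d, and suppose that s_j < K·b_j for every coordinate j, where K > 0. Then the cosine of the angle between b and s+b is strictly greater than 1/(1 + K·√d). -/
/-! Since `⟪b, s⟫ > 0`, the numerator `⟪b, s + b⟫` exceeds `‖b‖²`, while coordinatewise domination
gives `‖s‖ ≤ K‖b‖`, hence `‖s + b‖ ≤ (1 + K)‖b‖`. This already yields the bound `1 / (1 + K)`;
the factor `√d ≥ 1` only weakens it. -/

open RealInnerProductSpace InnerProductGeometry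

theorem PiLp.norm_le_norm_of_forall_norm_le {ι : Type*} [Fintype ι] {β : ι → Type*}
    [∀ i, SeminormedAddCommGroup (β i)] {x y : PiLp 2 β} (h : ∀ i, ‖x i‖ ≤ ‖y i‖) :
    ‖x‖ ≤ ‖y‖ := by
  refine (sq_le_sq₀ (norm_nonneg x) (norm_nonneg y)).1 ?_
  rw [PiLp.norm_sq_eq_of_L2, PiLp.norm_sq_eq_of_L2]
  exact Finset.sum_le_sum fun i _ => pow_le_pow_left₀ (norm_nonneg _) (h i) 2

theorem EuclideanSpace.inner_pos_of_forall_pos {ι : Type*} [Fintype ι] [Nonempty ι]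
    {x y : EuclideanSpace ℝ ι} (hx : ∀ i, 0 < x i) (hy : ∀ i, 0 < y i) : 0 < ⟪x, y⟫ := by
  rw [PiLp.inner_apply]
  exact Finset.sum_pos (fun i _ => mul_pos (hy i) (hx i)) Finset.univ_nonempty

theorem EuclideanSpace.norm_le_mul_norm_of_forall_le {ι : Type*} [Fintype ι]
    {x y : EuclideanSpace ℝ ι} {c : ℝ} (hc : 0 ≤ c) (hx : ∀ i, 0 ≤ x i)
    (hxy : ∀ i, x i ≤ c * y i) : ‖x‖ ≤ c * ‖y‖ := by
  rw [← Real.norm_of_nonneg hc, ← norm_smul]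
  refine PiLp.norm_le_norm_of_forall_norm_le fun i => ?_
  rw [PiLp.smul_apply, smul_eq_mul, Real.norm_of_nonneg (hx i),
    Real.norm_of_nonneg ((hx i).trans (hxy i))]
  exact hxy i

theorem one_div_one_add_lt_cos_angle_add {E : Type*} [NormedAddCommGroup E]
    [InnerProductSpace ℝ E] {b s : E} {c : ℝ} (hbs : 0 < ⟪b, s⟫) (hs : ‖s‖ ≤ c * ‖b‖) :
    1 / (1 + c) < Real.cos (angle b (s + b)) := by
  rw [cos_angle]
  have hb : 0 < ‖b‖ := norm_pos_iff.2 (by rintro rfl; simp at hbs)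
  have hc : 0 ≤ c := nonneg_of_mul_nonneg_left ((norm_nonneg s).trans hs) hb
  have hnum : ‖b‖ ^ 2 < ⟪b, s + b⟫ := by
    rw [inner_add_right, real_inner_self_eq_norm_sq]
    linarith
  have hsb : 0 < ‖s + b‖ :=
    norm_pos_iff.2 (by intro h; rw [h, inner_zero_right] at hnum; linarith [sq_nonneg ‖b‖])
  have hden : ‖b‖ * ‖s + b‖ ≤ (1 + c) * ‖b‖ ^ 2 := by
    have : ‖s + b‖ ≤ (1 + c) * ‖b‖ := by linarith [norm_add_le s b]
    nlinarith
  calc 1 / (1 + c) = ‖b‖ ^ 2 / ((1 + c) * ‖b‖ ^ 2) := by field_simp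
    _ ≤ ‖b‖ ^ 2 / (‖b‖ * ‖s + b‖) := div_le_div_of_nonneg_left (by positivity) (by positivity) hden
    _ < ⟪b, s + b⟫ / (‖b‖ * ‖s + b‖) := div_lt_div_of_pos_right hnum (by positivity)

theorem cos_angle_lower_bound (d : ℕ) (hd : 0 < d) (K : ℝ) (hK : 0 < K)
    (b s : EuclideanSpace ℝ (Fin d))
    (hb : ∀ j, 0 < b j) (hs : ∀ j, 0 < s j) (hsb : ∀ j, s j < K * b j) :
    1 / (1 + K * Real.sqrt d) < (inner ℝ b (s + b) : ℝ) / (‖b‖ * ‖s + b‖) := by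
  have : NeZero d := ⟨hd.ne'⟩
  have hK_le : K ≤ K * Real.sqrt d :=
    le_mul_of_one_le_right hK.le (Real.one_le_sqrt.2 (by exact_mod_cast hd))
  rw [← cos_angle]
  calc 1 / (1 + K * Real.sqrt d) ≤ 1 / (1 + K) :=
        one_div_le_one_div_of_le (by positivity) (by linarith)
    _ < Real.cos (angle b (s + b)) :=
        one_div_one_add_lt_cos_angle_add (EuclideanSpace.inner_pos_of_forall_pos hb hs)
          (EuclideanSpace.norm_le_mul_norm_of_forall_le hK.le (fun j => (hs j).le)
            (fun j => (hsb j).le))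
end

section
/- Let (Δ_k) be a sequence of subsets of R^d with Δ_k = P_1 P_2 ⋯ P_k Λ^d, where each P_k is a positive invertible d×d matrix and Λ^d is the open positive orthant. Then the intersection ⋂_{k∈N} Δ_k is nonempty. -/
/-!
Put `A k = P 0 * ⋯ * P k`. A matrix with positive entries sends every nonzero vector of the closed
orthant into the open one. Normalising the image of the standard simplex under `A k` back onto the
simplex therefore gives nonempty compact sets `K k`, and `K (k + 1) ⊆ K k` because
`A (k + 1) = A k * P (k + 1)` and `P (k + 1)` maps the simplex into the open orthant. A point of
`⋂ K k` lies in `K (k + 1)`, so it is a positive multiple of `A k *ᵥ (P (k + 1) *ᵥ y)` for some `y`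
in the simplex, hence lies in the image of the open orthant under `A k`.
-/

open Matrix Finset

variable {ι : Type*} [Fintype ι]

noncomputable def sumNormalize (x : ι → ℝ) : ι → ℝ := (∑ i, x i)⁻¹ • x

lemma sumNormalize_smul {c : ℝ} (hc : c ≠ 0) (x : ι → ℝ) :
    sumNormalize (c • x) = sumNormalize x := by
  simp only [sumNormalize, Pi.smul_apply, smul_eq_mul, ← mul_sum, smul_smul, _root_.mul_inv_rev,
    inv_mul_cancel_right₀ hc]

lemma sumNormalize_mem_stdSimplex {x : ι → ℝ} (hx : 0 ≤ x) (hs : ∑ i, x i ≠ 0) :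
    sumNormalize x ∈ stdSimplex ℝ ι :=
  ⟨fun i => smul_nonneg (inv_nonneg.2 (sum_nonneg fun i _ => hx i)) (hx i), by
    simp only [sumNormalize, Pi.smul_apply, smul_eq_mul, ← mul_sum, inv_mul_cancel₀ hs]⟩

lemma continuousOn_sumNormalize : ContinuousOn (sumNormalize (ι := ι)) {x | ∑ i, x i ≠ 0} :=
  ((continuousOn_finsetSum _ fun i _ => (continuous_apply i).continuousOn).inv₀
    fun _ hx => hx).smul continuousOn_id

lemma ne_zero_of_mem_stdSimplex {x : ι → ℝ} (hx : x ∈ stdSimplex ℝ ι) : x ≠ 0 := by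
  rintro rfl
  simpa using hx.2

lemma nonempty_of_mem_stdSimplex {y : ι → ℝ} (hy : y ∈ stdSimplex ℝ ι) : Nonempty ι :=
  let ⟨j, _⟩ := Function.ne_iff.1 (ne_zero_of_mem_stdSimplex hy); ⟨j⟩

lemma sum_pos_of_forall_pos [Nonempty ι] {x : ι → ℝ} (hx : ∀ i, 0 < x i) : 0 < ∑ i, x i :=
  sum_pos (fun i _ => hx i) univ_nonempty

namespace Matrix

lemma mulVec_pos_of_pos {M : Matrix ι ι ℝ} (hM : ∀ i j, 0 < M i j) {y : ι → ℝ}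
    (hy : 0 ≤ y) (hy0 : y ≠ 0) (i : ι) : 0 < (M *ᵥ y) i := by
  obtain ⟨j, hj⟩ := Function.ne_iff.1 hy0
  exact sum_pos' (fun k _ => mul_nonneg (hM i k).le (hy k))
    ⟨j, mem_univ j, mul_pos (hM i j) ((hy j).lt_of_ne' hj)⟩

lemma mul_pos_of_pos [Nonempty ι] {M N : Matrix ι ι ℝ} (hM : ∀ i j, 0 < M i j)
    (hN : ∀ i j, 0 < N i j) (i j : ι) : 0 < (M * N) i j :=
  sum_pos (fun k _ => mul_pos (hM i k) (hN k j)) univ_nonempty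

end Matrix

/-- The cone `M *ᵥ {x | 0 ≤ x}` cut by the hyperplane `∑ i, x i = 1`, when `M` has positive
entries. -/
noncomputable def normalizedImage (M : Matrix ι ι ℝ) : Set (ι → ℝ) :=
  (fun y => sumNormalize (M *ᵥ y)) '' stdSimplex ℝ ι

section

variable {M N : Matrix ι ι ℝ}

lemma sum_mulVec_pos_of_mem_stdSimplex (hM : ∀ i j, 0 < M i j) {y : ι → ℝ}
    (hy : y ∈ stdSimplex ℝ ι) : 0 < ∑ i, (M *ᵥ y) i := by
  have := nonempty_of_mem_stdSimplex hy
  exact sum_pos_of_forall_pos (mulVec_pos_of_pos hM hy.1 (ne_zero_of_mem_stdSimplex hy))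

lemma isCompact_normalizedImage (hM : ∀ i j, 0 < M i j) : IsCompact (normalizedImage M) :=
  (isCompact_stdSimplex ℝ ι).image_of_continuousOn <|
    continuousOn_sumNormalize.comp (M.mulVecLin.continuous_of_finiteDimensional.continuousOn)
      fun _ hy => (sum_mulVec_pos_of_mem_stdSimplex hM hy).ne'

lemma normalizedImage_nonempty [Nonempty ι] : (normalizedImage M).Nonempty := by
  classical
  exact ⟨_, _, single_mem_stdSimplex ℝ (Classical.arbitrary ι), rfl⟩

lemma normalizedImage_mul_subset (hN : ∀ i j, 0 < N i j) :
    normalizedImage (M * N) ⊆ normalizedImage M := by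
  rintro _ ⟨y, hy, rfl⟩
  have hs := sum_mulVec_pos_of_mem_stdSimplex hN hy
  refine ⟨sumNormalize (N *ᵥ y), sumNormalize_mem_stdSimplex
    (fun i => (mulVec_pos_of_pos hN hy.1 (ne_zero_of_mem_stdSimplex hy) i).le) hs.ne', ?_⟩
  have hscale : M *ᵥ sumNormalize (N *ᵥ y) = (∑ i, (N *ᵥ y) i)⁻¹ • (M * N) *ᵥ y := by
    rw [sumNormalize, mulVec_smul, mulVec_mulVec]
  exact (congrArg sumNormalize hscale).trans (sumNormalize_smul (inv_ne_zero hs.ne') _)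

lemma normalizedImage_mul_subset_image (hM : ∀ i j, 0 < M i j) (hN : ∀ i j, 0 < N i j) :
    normalizedImage (M * N) ⊆ M.mulVec '' {x | ∀ i, 0 < x i} := by
  rintro _ ⟨y, hy, rfl⟩
  have := nonempty_of_mem_stdSimplex hy
  have ht := sum_mulVec_pos_of_mem_stdSimplex (mul_pos_of_pos hM hN) hy
  refine ⟨(∑ i, ((M * N) *ᵥ y) i)⁻¹ • N *ᵥ y, fun i => mul_pos (inv_pos.2 ht)
    (mulVec_pos_of_pos hN hy.1 (ne_zero_of_mem_stdSimplex hy) i), ?_⟩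
  rw [mulVec_smul, mulVec_mulVec]
  rfl

end

lemma prod_range_map_pos [DecidableEq ι] [Nonempty ι] {P : ℕ → Matrix ι ι ℝ}
    (hP : ∀ k i j, 0 < P k i j) (k : ℕ) (i j : ι) : 0 < ((List.range (k + 1)).map P).prod i j := by
  induction k generalizing i j with
  | zero => simpa using hP 0 i j
  | succ k ih => rw [List.prod_range_succ]; exact mul_pos_of_pos ih (hP _) i j

theorem iInter_positive_cones_nonempty_general (d : ℕ)
    (P : ℕ → Matrix (Fin d) (Fin d) ℝ)
    (hpos : ∀ k i j, 0 < P k i j) :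
    (⋂ k : ℕ,
        (((List.range (k + 1)).map P).prod).mulVec ''
          {x : Fin d → ℝ | ∀ i, 0 < x i}).Nonempty := by
  rcases isEmpty_or_nonempty (Fin d) with _ | _
  · exact ⟨0, Set.mem_iInter.2 fun _ => ⟨0, isEmptyElim, Subsingleton.elim _ _⟩⟩
  set A : ℕ → Matrix (Fin d) (Fin d) ℝ := fun k => ((List.range (k + 1)).map P).prod
  have hA : ∀ k i j, 0 < A k i j := prod_range_map_pos hpos
  have hA_succ (k : ℕ) : A (k + 1) = A k * P (k + 1) := List.prod_range_succ P (k + 1)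
  obtain ⟨z, hz⟩ :=
    (isCompact_normalizedImage (hA 0)).nonempty_iInter_of_sequence_nonempty_isCompact_isClosed
      (fun k => normalizedImage (A k))
      (fun k => hA_succ k ▸ normalizedImage_mul_subset (hpos (k + 1)))
      (fun _ => normalizedImage_nonempty)
      (fun k => (isCompact_normalizedImage (hA k)).isClosed)
  refine ⟨z, Set.mem_iInter.2 fun k => ?_⟩
  exact normalizedImage_mul_subset_image (hA k) (hpos (k + 1))
    (hA_succ k ▸ Set.mem_iInter.1 hz (k + 1))

theorem iInter_positive_cones_nonempty (d : ℕ)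
    (P : ℕ → Matrix (Fin d) (Fin d) ℝ)
    (hpos : ∀ k i j, 0 < P k i j) (hinv : ∀ k, IsUnit (P k)) :
    (⋂ k : ℕ,
        (((List.range (k + 1)).map P).prod).mulVec ''
          {x : Fin d → ℝ | ∀ i, 0 < x i}).Nonempty :=
  iInter_positive_cones_nonempty_general d P hpos
end
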